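/- Let β be a real 3×3 matrix and S, P ∈ ℝ³. The following are equivalent: (i) there exist O_L, O_R ∈ SO(3) such that the matrix β' = O_L β O_Rᵀ satisfies β'_{01} = β'_{10} = β'_{12} = β'_{21} = 0, and the vectors S' = O_L S and P' = O_R P satisfy S'_1 = 0 and P'_1 = 0 (indices 0,1,2 corresponding to X,Y,Z; these are the conditions for the associated two-qubit Hamiltonian to be real); (ii) there exist real numbers σ₁, σ₂, orthonormal vectors u₁, u₂ ∈ ℝ³, and orthonormal vectors v₁, v₂ ∈ ℝ³ with β v_i = σ_i u_i and βᵀ u_i = σ_i v_i for i = 1,2, such that S lies in the span of {u₁, u₂} and P lies in the span of {v₁, v₂}. -/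

import Mathlib

open Matrix

lemma sym_diag (P Q S : ℝ) : ∃ c t l m : ℝ, c^2 + t^2 = 1 ∧
    P*c + Q*t = l*c ∧ Q*c + S*t = l*t ∧ Q*c - P*t = -(m*t) ∧ S*c - Q*t = m*c := by
  by_cases hQ : Q = 0
  · exact ⟨1, 0, P, S, by norm_num, by ring, by rw [hQ]; ring, by rw [hQ]; ring, by ring⟩
  · obtain ⟨D, hD2⟩ : ∃ D : ℝ, D^2 = (P-S)^2 + 4*Q^2 :=
      ⟨Real.sqrt _, Real.sq_sqrt (by positivity)⟩
    have hL : ∃ L : ℝ, L^2 - (P+S)*L + P*S - Q^2 = 0 :=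
      ⟨(P + S + D)/2, by linear_combination hD2/4⟩
    obtain ⟨L, hchar⟩ := hL
    obtain ⟨M, hM2⟩ : ∃ M : ℝ, M^2 = Q^2 + (L-P)^2 :=
      ⟨Real.sqrt _, Real.sq_sqrt (by positivity)⟩
    have hMne : M ≠ 0 := by
      intro h; rw [h] at hM2
      have : Q^2 ≤ 0 := by nlinarith [sq_nonneg (L-P)]
      exact hQ (by nlinarith [sq_nonneg Q])
    refine ⟨Q/M, (L-P)/M, L, P + S - L, ?_, ?_, ?_, ?_, ?_⟩
    · field_simp; linarith [hM2]
    · field_simp; ring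
    · field_simp; linear_combination -hchar
    · field_simp; linear_combination -hchar
    · field_simp; ring

lemma svd2 (p q r s : ℝ) : ∃ c₁ t₁ c₂ t₂ σ₁ σ₂ : ℝ,
    c₁^2 + t₁^2 = 1 ∧ c₂^2 + t₂^2 = 1 ∧
    p*c₂ + q*t₂ = σ₁*c₁ ∧ r*c₂ + s*t₂ = σ₁*t₁ ∧
    q*c₂ - p*t₂ = -(σ₂*t₁) ∧ s*c₂ - r*t₂ = σ₂*c₁ ∧
    p*c₁ + r*t₁ = σ₁*c₂ ∧ q*c₁ + s*t₁ = σ₁*t₂ ∧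
    r*c₁ - p*t₁ = -(σ₂*t₂) ∧ s*c₁ - q*t₁ = σ₂*c₂ := by
  -- find symmetrizing rotation (c,t)
  obtain ⟨c, t, hc, hs⟩ : ∃ c t : ℝ, c^2 + t^2 = 1 ∧ c*(q - r) = t*(p + s) := by
    by_cases hn : (p+s)^2 + (q-r)^2 = 0
    · have h1 : p + s = 0 := by nlinarith [sq_nonneg (p+s), sq_nonneg (q-r)]
      have h2 : q - r = 0 := by nlinarith [sq_nonneg (p+s), sq_nonneg (q-r)]
      exact ⟨1, 0, by norm_num, by rw [h1, h2]; ring⟩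
    · obtain ⟨n, hn2⟩ : ∃ n : ℝ, n^2 = (p+s)^2 + (q-r)^2 :=
        ⟨Real.sqrt _, Real.sq_sqrt (by positivity)⟩
      have hnne : n ≠ 0 := by intro h; rw [h] at hn2; exact hn (by linarith [hn2])
      refine ⟨(p+s)/n, (q-r)/n, by field_simp; linarith [hn2], by field_simp⟩
  obtain ⟨c₂, t₂, l, m, hc2, e1, e2, e3, e4⟩ := sym_diag (c*p - t*r) (c*q - t*s) (t*q + c*s)
  have hp' : p = c*(c*p - t*r) + t*(c*q - t*s) := by linear_combination (-p)*hc - t*hs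
  have hq' : q = c*(c*q - t*s) + t*(t*q + c*s) := by linear_combination (-q)*hc
  have hr' : r = -(t*(c*p - t*r)) + c*(c*q - t*s) := by linear_combination (-r)*hc - c*hs
  have hs' : s = -(t*(c*q - t*s)) + c*(t*q + c*s) := by linear_combination (-s)*hc
  refine ⟨c*c₂ + t*t₂, c*t₂ - t*c₂, c₂, t₂, l, m, ?_, hc2, ?_, ?_, ?_, ?_, ?_, ?_, ?_, ?_⟩
  · linear_combination hc + (c^2 + t^2 - 1)*hc2 + hc2
  · linear_combination c₂*hp' + t₂*hq' + c*e1 + t*e2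
  · linear_combination c₂*hr' + t₂*hs' - t*e1 + c*e2
  · linear_combination c₂*hq' - t₂*hp' + c*e3 + t*e4
  · linear_combination c₂*hs' - t₂*hr' + c*e4 - t*e3
  · linear_combination (c*c₂ + t*t₂)*hp' + (c*t₂ - t*c₂)*hr' + e1 + ((c*p-t*r)*c₂ + (c*q-t*s)*t₂)*hc
  · linear_combination (c*c₂ + t*t₂)*hq' + (c*t₂ - t*c₂)*hs' + e2 + ((c*q-t*s)*c₂ + (t*q+c*s)*t₂)*hc
  · linear_combination (c*c₂ + t*t₂)*hr' - (c*t₂ - t*c₂)*hp' + e3 + ((c*q-t*s)*c₂ - (c*p-t*r)*t₂)*hc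
  · linear_combination (c*c₂ + t*t₂)*hs' - (c*t₂ - t*c₂)*hq' + e4 + ((t*q+c*s)*c₂ - (c*q-t*s)*t₂)*hc

/-- `O` is a real 3×3 special orthogonal matrix. -/
def IsSO3 (O : Matrix (Fin 3) (Fin 3) ℝ) : Prop := O * Oᵀ = 1 ∧ O.det = 1

theorem real_under_local_rotations_iff_singular_pair_span
    (β : Matrix (Fin 3) (Fin 3) ℝ) (S P : Fin 3 → ℝ) :
    (∃ OL OR : Matrix (Fin 3) (Fin 3) ℝ, IsSO3 OL ∧ IsSO3 OR ∧
      (OL * β * ORᵀ) 0 1 = 0 ∧ (OL * β * ORᵀ) 1 0 = 0 ∧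
      (OL * β * ORᵀ) 1 2 = 0 ∧ (OL * β * ORᵀ) 2 1 = 0 ∧
      (OL *ᵥ S) 1 = 0 ∧ (OR *ᵥ P) 1 = 0) ↔
    (∃ (σ₁ σ₂ : ℝ) (u₁ u₂ v₁ v₂ : Fin 3 → ℝ),
      u₁ ⬝ᵥ u₁ = 1 ∧ u₂ ⬝ᵥ u₂ = 1 ∧ u₁ ⬝ᵥ u₂ = 0 ∧
      v₁ ⬝ᵥ v₁ = 1 ∧ v₂ ⬝ᵥ v₂ = 1 ∧ v₁ ⬝ᵥ v₂ = 0 ∧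
      β *ᵥ v₁ = σ₁ • u₁ ∧ βᵀ *ᵥ u₁ = σ₁ • v₁ ∧
      β *ᵥ v₂ = σ₂ • u₂ ∧ βᵀ *ᵥ u₂ = σ₂ • v₂ ∧
      (∃ c₁ c₂ : ℝ, S = c₁ • u₁ + c₂ • u₂) ∧
      (∃ d₁ d₂ : ℝ, P = d₁ • v₁ + d₂ • v₂)) := by
  constructor
  · intro h
    obtain ⟨OL, OR, ⟨hOL, _⟩, ⟨hOR, _⟩, h01, h10, h12, h21, hS1, hP1⟩ := h
    have hOL' : OLᵀ * OL = 1 := mul_eq_one_comm.mp hOL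
    have hOR' : ORᵀ * OR = 1 := mul_eq_one_comm.mp hOR
    set B := OL * β * ORᵀ with hBdef
    -- scalar orthonormality of rows
    have L00 : OL 0 0 * OL 0 0 + OL 0 1 * OL 0 1 + OL 0 2 * OL 0 2 = 1 := by
      have := congrFun (congrFun hOL 0) 0
      simpa [Matrix.mul_apply, Matrix.transpose_apply, Fin.sum_univ_three, Matrix.one_apply]
        using this
    have L22 : OL 2 0 * OL 2 0 + OL 2 1 * OL 2 1 + OL 2 2 * OL 2 2 = 1 := by
      have := congrFun (congrFun hOL 2) 2
      simpa [Matrix.mul_apply, Matrix.transpose_apply, Fin.sum_univ_three, Matrix.one_apply]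
        using this
    have L02 : OL 0 0 * OL 2 0 + OL 0 1 * OL 2 1 + OL 0 2 * OL 2 2 = 0 := by
      have := congrFun (congrFun hOL 0) 2
      simpa [Matrix.mul_apply, Matrix.transpose_apply, Fin.sum_univ_three, Matrix.one_apply]
        using this
    have R00 : OR 0 0 * OR 0 0 + OR 0 1 * OR 0 1 + OR 0 2 * OR 0 2 = 1 := by
      have := congrFun (congrFun hOR 0) 0
      simpa [Matrix.mul_apply, Matrix.transpose_apply, Fin.sum_univ_three, Matrix.one_apply]
        using this
    have R22 : OR 2 0 * OR 2 0 + OR 2 1 * OR 2 1 + OR 2 2 * OR 2 2 = 1 := by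
      have := congrFun (congrFun hOR 2) 2
      simpa [Matrix.mul_apply, Matrix.transpose_apply, Fin.sum_univ_three, Matrix.one_apply]
        using this
    have R02 : OR 0 0 * OR 2 0 + OR 0 1 * OR 2 1 + OR 0 2 * OR 2 2 = 0 := by
      have := congrFun (congrFun hOR 0) 2
      simpa [Matrix.mul_apply, Matrix.transpose_apply, Fin.sum_univ_three, Matrix.one_apply]
        using this
    -- column relations
    have hctr : OLᵀ * B = β * ORᵀ := by
      rw [hBdef, Matrix.mul_assoc OL β ORᵀ, ← Matrix.mul_assoc OLᵀ OL (β * ORᵀ), hOL',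
        Matrix.one_mul]
    have hctr2 : ORᵀ * Bᵀ = βᵀ * OLᵀ := by
      rw [hBdef, Matrix.transpose_mul, Matrix.transpose_mul, Matrix.transpose_transpose,
        ← Matrix.mul_assoc ORᵀ OR (βᵀ * OLᵀ), hOR', Matrix.one_mul]
    have hA : ∀ j i : Fin 3, OL 0 i * B 0 j + OL 1 i * B 1 j + OL 2 i * B 2 j
        = β i 0 * OR j 0 + β i 1 * OR j 1 + β i 2 * OR j 2 := by
      intro j i
      have := congrFun (congrFun hctr i) j
      simpa [Matrix.mul_apply, Matrix.transpose_apply, Fin.sum_univ_three] using this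
    have hAt : ∀ i j : Fin 3, OR 0 i * B j 0 + OR 1 i * B j 1 + OR 2 i * B j 2
        = β 0 i * OL j 0 + β 1 i * OL j 1 + β 2 i * OL j 2 := by
      intro i j
      have := congrFun (congrFun hctr2 i) j
      simpa [Matrix.mul_apply, Matrix.transpose_apply, Fin.sum_univ_three] using this
    -- decomposition of S and P
    simp only [Matrix.mulVec, dotProduct, Fin.sum_univ_three] at hS1 hP1
    have hSd : ∀ i, S i = (OL 0 0 * S 0 + OL 0 1 * S 1 + OL 0 2 * S 2) * OL 0 i
        + (OL 2 0 * S 0 + OL 2 1 * S 1 + OL 2 2 * S 2) * OL 2 i := by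
      intro i
      have h1 : OLᵀ *ᵥ (OL *ᵥ S) = S := by
        rw [Matrix.mulVec_mulVec, hOL', Matrix.one_mulVec]
      have h2 := congrFun h1 i
      simp only [Matrix.mulVec, dotProduct, Matrix.transpose_apply, Fin.sum_univ_three] at h2
      linear_combination -h2 + OL 1 i * hS1
    have hPd : ∀ i, P i = (OR 0 0 * P 0 + OR 0 1 * P 1 + OR 0 2 * P 2) * OR 0 i
        + (OR 2 0 * P 0 + OR 2 1 * P 1 + OR 2 2 * P 2) * OR 2 i := by
      intro i
      have h1 : ORᵀ *ᵥ (OR *ᵥ P) = P := by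
        rw [Matrix.mulVec_mulVec, hOR', Matrix.one_mulVec]
      have h2 := congrFun h1 i
      simp only [Matrix.mulVec, dotProduct, Matrix.transpose_apply, Fin.sum_univ_three] at h2
      linear_combination -h2 + OR 1 i * hP1
    obtain ⟨c₁, t₁, c₂, t₂, σ₁, σ₂, hc1, hc2, g1, g2, g3, g4, g5, g6, g7, g8⟩ :=
      svd2 (B 0 0) (B 0 2) (B 2 0) (B 2 2)
    refine ⟨σ₁, σ₂,
      (fun i => c₁ * OL 0 i + t₁ * OL 2 i), (fun i => -t₁ * OL 0 i + c₁ * OL 2 i),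
      (fun i => c₂ * OR 0 i + t₂ * OR 2 i), (fun i => -t₂ * OR 0 i + c₂ * OR 2 i),
      ?_, ?_, ?_, ?_, ?_, ?_, ?_, ?_, ?_, ?_, ?_, ?_⟩
    · simp only [dotProduct, Fin.sum_univ_three]
      linear_combination c₁^2*L00 + t₁^2*L22 + 2*c₁*t₁*L02 + hc1
    · simp only [dotProduct, Fin.sum_univ_three]
      linear_combination t₁^2*L00 + c₁^2*L22 - 2*c₁*t₁*L02 + hc1
    · simp only [dotProduct, Fin.sum_univ_three]
      linear_combination -c₁*t₁*L00 + c₁*t₁*L22 + (c₁^2 - t₁^2)*L02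
    · simp only [dotProduct, Fin.sum_univ_three]
      linear_combination c₂^2*R00 + t₂^2*R22 + 2*c₂*t₂*R02 + hc2
    · simp only [dotProduct, Fin.sum_univ_three]
      linear_combination t₂^2*R00 + c₂^2*R22 - 2*c₂*t₂*R02 + hc2
    · simp only [dotProduct, Fin.sum_univ_three]
      linear_combination -c₂*t₂*R00 + c₂*t₂*R22 + (c₂^2 - t₂^2)*R02
    · funext i
      simp only [Matrix.mulVec, dotProduct, Fin.sum_univ_three, Pi.smul_apply, smul_eq_mul]
      linear_combination (-c₂)*(hA 0 i) + (-t₂)*(hA 2 i) + OL 0 i*g1 + OL 2 i*g2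
        + c₂*OL 1 i*h10 + t₂*OL 1 i*h12
    · funext i
      simp only [Matrix.mulVec, dotProduct, Matrix.transpose_apply, Fin.sum_univ_three,
        Pi.smul_apply, smul_eq_mul]
      linear_combination (-c₁)*(hAt i 0) + (-t₁)*(hAt i 2) + OR 0 i*g5 + OR 2 i*g6
        + c₁*OR 1 i*h01 + t₁*OR 1 i*h21
    · funext i
      simp only [Matrix.mulVec, dotProduct, Fin.sum_univ_three, Pi.smul_apply, smul_eq_mul]
      linear_combination t₂*(hA 0 i) + (-c₂)*(hA 2 i) + OL 0 i*g3 + OL 2 i*g4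
        + (-t₂)*OL 1 i*h10 + c₂*OL 1 i*h12
    · funext i
      simp only [Matrix.mulVec, dotProduct, Matrix.transpose_apply, Fin.sum_univ_three,
        Pi.smul_apply, smul_eq_mul]
      linear_combination t₁*(hAt i 0) + (-c₁)*(hAt i 2) + OR 0 i*g7 + OR 2 i*g8
        + (-t₁)*OR 1 i*h01 + c₁*OR 1 i*h21
    · refine ⟨(OL 0 0 * S 0 + OL 0 1 * S 1 + OL 0 2 * S 2)*c₁
        + (OL 2 0 * S 0 + OL 2 1 * S 1 + OL 2 2 * S 2)*t₁,
        -(OL 0 0 * S 0 + OL 0 1 * S 1 + OL 0 2 * S 2)*t₁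
        + (OL 2 0 * S 0 + OL 2 1 * S 1 + OL 2 2 * S 2)*c₁, ?_⟩
      funext i
      simp only [Pi.add_apply, Pi.smul_apply, smul_eq_mul]
      linear_combination hSd i - ((OL 0 0 * S 0 + OL 0 1 * S 1 + OL 0 2 * S 2) * OL 0 i
        + (OL 2 0 * S 0 + OL 2 1 * S 1 + OL 2 2 * S 2) * OL 2 i)*hc1
    · refine ⟨(OR 0 0 * P 0 + OR 0 1 * P 1 + OR 0 2 * P 2)*c₂
        + (OR 2 0 * P 0 + OR 2 1 * P 1 + OR 2 2 * P 2)*t₂,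
        -(OR 0 0 * P 0 + OR 0 1 * P 1 + OR 0 2 * P 2)*t₂
        + (OR 2 0 * P 0 + OR 2 1 * P 1 + OR 2 2 * P 2)*c₂, ?_⟩
      funext i
      simp only [Pi.add_apply, Pi.smul_apply, smul_eq_mul]
      linear_combination hPd i - ((OR 0 0 * P 0 + OR 0 1 * P 1 + OR 0 2 * P 2) * OR 0 i
        + (OR 2 0 * P 0 + OR 2 1 * P 1 + OR 2 2 * P 2) * OR 2 i)*hc2
  · intro h
    obtain ⟨σ₁, σ₂, u₁, u₂, v₁, v₂, huu1, huu2, huu12, hvv1, hvv2, hvv12,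
      hbv1, hbu1, hbv2, hbu2, ⟨c₁, c₂, hS⟩, ⟨d₁, d₂, hP⟩⟩ := h
    simp only [dotProduct, Fin.sum_univ_three] at huu1 huu2 huu12 hvv1 hvv2 hvv12
    simp only [funext_iff, Matrix.mulVec, dotProduct, Fin.sum_univ_three,
      Matrix.transpose_apply, Pi.smul_apply, smul_eq_mul] at hbv1 hbu1 hbv2 hbu2
    have hent : ∀ (M N : Matrix (Fin 3) (Fin 3) ℝ) (i j : Fin 3),
        (M * β * Nᵀ) i j = M i ⬝ᵥ (β *ᵥ N j) := by
      intro M N i j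
      simp only [Matrix.mul_apply, Matrix.mulVec, dotProduct, Matrix.transpose_apply,
        Fin.sum_univ_three]
      ring
    refine ⟨Matrix.of ![u₁, ![u₂ 1*u₁ 2 - u₂ 2*u₁ 1, u₂ 2*u₁ 0 - u₂ 0*u₁ 2,
        u₂ 0*u₁ 1 - u₂ 1*u₁ 0], u₂],
      Matrix.of ![v₁, ![v₂ 1*v₁ 2 - v₂ 2*v₁ 1, v₂ 2*v₁ 0 - v₂ 0*v₁ 2,
        v₂ 0*v₁ 1 - v₂ 1*v₁ 0], v₂], ⟨?_, ?_⟩, ⟨?_, ?_⟩, ?_, ?_, ?_, ?_, ?_, ?_⟩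
    · ext i j
      fin_cases i <;> fin_cases j <;>
        simp only [Matrix.mul_apply, Matrix.transpose_apply, Fin.sum_univ_three, Matrix.of_apply,
          Matrix.cons_val_zero, Matrix.cons_val_one, Matrix.cons_val_two, Matrix.head_cons,
          Matrix.tail_cons, Matrix.one_apply, Fin.reduceFinMk] <;>
        (try norm_num [Fin.ext_iff]) <;>
        first
          | ring1
          | linear_combination huu1
          | linear_combination huu2
          | linear_combination huu12
          | linear_combination (u₂ 0^2 + u₂ 1^2 + u₂ 2^2) * huu1 + huu2
              - (u₁ 0*u₂ 0 + u₁ 1*u₂ 1 + u₁ 2*u₂ 2) * huu12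
    · rw [Matrix.det_fin_three]
      simp only [Matrix.mul_apply, Matrix.transpose_apply, Fin.sum_univ_three, Matrix.of_apply,
        Matrix.cons_val_zero, Matrix.cons_val_one, Matrix.cons_val_two, Matrix.head_cons,
        Matrix.tail_cons, Matrix.one_apply]
      linear_combination (u₂ 0^2 + u₂ 1^2 + u₂ 2^2) * huu1 + huu2
        - (u₁ 0*u₂ 0 + u₁ 1*u₂ 1 + u₁ 2*u₂ 2) * huu12
    · ext i j
      fin_cases i <;> fin_cases j <;>
        simp only [Matrix.mul_apply, Matrix.transpose_apply, Fin.sum_univ_three, Matrix.of_apply,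
          Matrix.cons_val_zero, Matrix.cons_val_one, Matrix.cons_val_two, Matrix.head_cons,
          Matrix.tail_cons, Matrix.one_apply, Fin.reduceFinMk] <;>
        (try norm_num [Fin.ext_iff]) <;>
        first
          | ring1
          | linear_combination hvv1
          | linear_combination hvv2
          | linear_combination hvv12
          | linear_combination (v₂ 0^2 + v₂ 1^2 + v₂ 2^2) * hvv1 + hvv2
              - (v₁ 0*v₂ 0 + v₁ 1*v₂ 1 + v₁ 2*v₂ 2) * hvv12
    · rw [Matrix.det_fin_three]
      simp only [Matrix.mul_apply, Matrix.transpose_apply, Fin.sum_univ_three, Matrix.of_apply,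
        Matrix.cons_val_zero, Matrix.cons_val_one, Matrix.cons_val_two, Matrix.head_cons,
        Matrix.tail_cons, Matrix.one_apply]
      linear_combination (v₂ 0^2 + v₂ 1^2 + v₂ 2^2) * hvv1 + hvv2
        - (v₁ 0*v₂ 0 + v₁ 1*v₂ 1 + v₁ 2*v₂ 2) * hvv12
    · rw [hent]
      simp only [Matrix.of_apply, Matrix.cons_val_zero, Matrix.cons_val_one, Matrix.cons_val_two,
        Matrix.head_cons, Matrix.tail_cons, Matrix.mulVec, dotProduct, Fin.sum_univ_three]
      linear_combination (v₂ 1*v₁ 2 - v₂ 2*v₁ 1) * hbu1 0 + (v₂ 2*v₁ 0 - v₂ 0*v₁ 2) * hbu1 1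
        + (v₂ 0*v₁ 1 - v₂ 1*v₁ 0) * hbu1 2
    · rw [hent]
      simp only [Matrix.of_apply, Matrix.cons_val_zero, Matrix.cons_val_one, Matrix.cons_val_two,
        Matrix.head_cons, Matrix.tail_cons, Matrix.mulVec, dotProduct, Fin.sum_univ_three]
      linear_combination (u₂ 1*u₁ 2 - u₂ 2*u₁ 1) * hbv1 0 + (u₂ 2*u₁ 0 - u₂ 0*u₁ 2) * hbv1 1
        + (u₂ 0*u₁ 1 - u₂ 1*u₁ 0) * hbv1 2
    · rw [hent]
      simp only [Matrix.of_apply, Matrix.cons_val_zero, Matrix.cons_val_one, Matrix.cons_val_two,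
        Matrix.head_cons, Matrix.tail_cons, Matrix.mulVec, dotProduct, Fin.sum_univ_three]
      linear_combination (u₂ 1*u₁ 2 - u₂ 2*u₁ 1) * hbv2 0 + (u₂ 2*u₁ 0 - u₂ 0*u₁ 2) * hbv2 1
        + (u₂ 0*u₁ 1 - u₂ 1*u₁ 0) * hbv2 2
    · rw [hent]
      simp only [Matrix.of_apply, Matrix.cons_val_zero, Matrix.cons_val_one, Matrix.cons_val_two,
        Matrix.head_cons, Matrix.tail_cons, Matrix.mulVec, dotProduct, Fin.sum_univ_three]
      linear_combination (v₂ 1*v₁ 2 - v₂ 2*v₁ 1) * hbu2 0 + (v₂ 2*v₁ 0 - v₂ 0*v₁ 2) * hbu2 1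
        + (v₂ 0*v₁ 1 - v₂ 1*v₁ 0) * hbu2 2
    · subst hS
      simp only [Matrix.mulVec, dotProduct, Fin.sum_univ_three, Matrix.of_apply,
        Matrix.cons_val_zero, Matrix.cons_val_one, Matrix.cons_val_two, Matrix.head_cons,
        Matrix.tail_cons, Pi.add_apply, Pi.smul_apply, smul_eq_mul]
      ring
    · subst hP
      simp only [Matrix.mulVec, dotProduct, Fin.sum_univ_three, Matrix.of_apply,
        Matrix.cons_val_zero, Matrix.cons_val_one, Matrix.cons_val_two, Matrix.head_cons,
        Matrix.tail_cons, Pi.add_apply, Pi.smul_apply, smul_eq_mul]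
      ring
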